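/- Let η be a substitution over A, p ≥ 1 an integer, x ∈ A, and m ∈ A* a proper prefix of η^p(x). Then there exists a unique x-admissible sequence (m_i, a_i)_{i=0,…,p-1} such that |m| = Σ_{j=0}^{p-1} |η^j(m_j)|; moreover m = η^{p-1}(m_{p-1}) η^{p-2}(m_{p-2}) ⋯ η^0(m_0). -/
import Mathlib


open Filter List

variable {A : Type*}

/-- A substitution applied to a word: concatenation of the images of its letters. -/
def substW (η : A → List A) (w : List A) : List A := (w.map η).flatten

/-- The `k`-th iterate of a substitution applied to a word. -/
def iterW (η : A → List A) (k : ℕ) (w : List A) : List A := (substW η)^[k] w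

/-- `η` is a substitution: nonempty images and at least one growing letter. -/
def IsSubstitution (η : A → List A) : Prop :=
  (∀ c, η c ≠ []) ∧ ∃ a, Tendsto (fun k => (iterW η k [a]).length) atTop atTop

/-- `(m i, a i)` for `i = 0, …, len-1` is an `x`-admissible sequence:
`m (i) ++ [a i]` is a prefix of `η (a (i+1))` and `m (len-1) ++ [a (len-1)]`
is a prefix of `η x`. -/
def AdmSeq (η : A → List A) (len : ℕ) (m : ℕ → List A) (a : ℕ → A) (x : A) : Prop :=
  (∀ i, i + 1 < len → (m i ++ [a i]) <+: η (a (i + 1))) ∧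
  (1 ≤ len → (m (len - 1) ++ [a (len - 1)]) <+: η x)

/-- `Σ_{j<k} |η^j(m_j)|`. -/
def sumLen (η : A → List A) (k : ℕ) (m : ℕ → List A) : ℕ :=
  ∑ j ∈ Finset.range k, (iterW η j (m j)).length

/-- `η^{k-1}(m_{k-1}) η^{k-2}(m_{k-2}) ⋯ η^0(m_0)`. -/
def concatDT (η : A → List A) (k : ℕ) (m : ℕ → List A) : List A :=
  ((List.range k).reverse.map (fun j => iterW η j (m j))).flatten

/-- The digit word `|m_{k-1}| ⊙ |m_{k-2}| ⊙ ⋯ ⊙ |m_0|`. -/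
def dtDigits (k : ℕ) (m : ℕ → List A) : List ℕ :=
  (List.range k).reverse.map (fun j => (m j).length)

/-- Partial run of the automaton `A_{η,x}`: from state `x`, the digit `d`
moves to the `d`-th letter of `η x` when `d < |η x|`. -/
def run (η : A → List A) : List ℕ → A → Option A
  | [], x => some x
  | d :: w, x => if h : d < (η x).length then run η w ((η x)[d]) else none

/-- `u` restricted to nonnegative positions is a periodic point of `η` of period `p`:
every `η^p`-image of a prefix of `u` is again a prefix of `u`. -/
def RightPer (η : A → List A) (p : ℕ) (u : ℤ → A) : Prop :=
  ∀ n : ℕ, ∀ j : ℕ, j < (iterW η p (List.ofFn (fun i : Fin (n+1) => u i))).length →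
    (iterW η p (List.ofFn (fun i : Fin (n+1) => u i)))[j]? = some (u j)

/-- `u` restricted to negative positions is a periodic point of `η` of period `p`:
every `η^p`-image of a suffix `u_{-(n+1)} ⋯ u_{-1}` of the left part is again a
suffix of the left part of `u`. -/
def LeftPer (η : A → List A) (p : ℕ) (u : ℤ → A) : Prop :=
  ∀ n : ℕ, ∀ j : ℕ,
    j < (iterW η p (List.ofFn (fun i : Fin (n+1) => u ((i : ℤ) - (n+1))))).length →
    (iterW η p (List.ofFn (fun i : Fin (n+1) => u ((i : ℤ) - (n+1)))))[j]? =
      some (u ((j : ℤ) -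
        (iterW η p (List.ofFn (fun i : Fin (n+1) => u ((i : ℤ) - (n+1))))).length))

/-- `u : ℤ → A` is a two-sided periodic point of `η` of period `p ≥ 1` with
growing seed `u₋₁ | u₀`. -/
def TwoSidedPerPoint (η : A → List A) (p : ℕ) (u : ℤ → A) : Prop :=
  1 ≤ p ∧ RightPer η p u ∧ LeftPer η p u ∧
  Tendsto (fun k => (iterW η k [u 0]).length) atTop atTop ∧
  Tendsto (fun k => (iterW η k [u (-1)]).length) atTop atTop

/-- The Dumont–Thomas decomposition data of a positive integer `n` with respect to
the letter `x` (Theorem of Dumont–Thomas for the right-infinite part):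
`p ∣ k`, `p ≤ k`, the sequence is `x`-admissible, `m_{k-1} ⋯ m_{k-p} ≠ ε` and
`Σ_{j<k} |η^j(m_j)| = n`. -/
def PosSpec (η : A → List A) (p : ℕ) (x : A) (n : ℤ) (k : ℕ) (m : ℕ → List A)
    (a : ℕ → A) : Prop :=
  p ∣ k ∧ p ≤ k ∧ AdmSeq η k m a x ∧ (∃ i, i < p ∧ m (k - 1 - i) ≠ []) ∧
  (sumLen η k m : ℤ) = n

/-- The Dumont–Thomas decomposition data of an integer `n ≤ -2` with respect to
the letter `b` (Theorem of Dumont–Thomas for the left-infinite part). -/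
def NegSpec (η : A → List A) (p : ℕ) (b : A) (n : ℤ) (k : ℕ) (m : ℕ → List A)
    (a : ℕ → A) : Prop :=
  p ∣ k ∧ p ≤ k ∧ AdmSeq η k m a b ∧
  ((List.range p).map (fun i => iterW η (p - 1 - i) (m (k - 1 - i)))).flatten
      ++ [a (k - p)] ≠ iterW η p [b] ∧
  (sumLen η k m : ℤ) = n + (iterW η k [b]).length

/-- `w` is the Dumont–Thomas complement representation `rep_u(n)` of `n ∈ ℤ`. -/
def RepSpec (η : A → List A) (p : ℕ) (u : ℤ → A) (n : ℤ) (w : List ℕ) : Prop :=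
  (n = 0 ∧ w = [0]) ∨ (n = -1 ∧ w = [1]) ∨
  (1 ≤ n ∧ ∃ k m a, PosSpec η p (u 0) n k m a ∧ w = 0 :: dtDigits k m) ∨
  (n ≤ -2 ∧ ∃ k m a, NegSpec η p (u (-1)) n k m a ∧ w = 1 :: dtDigits k m)

/-- Run of the automaton `A_{η,s}` with initial state `start`: the first digit
`0` (resp. `1`) moves to `u 0` (resp. `u (-1)`). -/
def runSeed (η : A → List A) (u : ℤ → A) : List ℕ → Option A
  | [] => none
  | d :: w => if d = 0 then run η w (u 0) else if d = 1 then run η w (u (-1)) else none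

/-- `|η^{k-p-1}(m_{k-1}) ⋯ η^0(m_p)|`, the `u`-quotient of a positive integer. -/
def uQuotPos (η : A → List A) (p k : ℕ) (m : ℕ → List A) : ℤ :=
  ∑ j ∈ Finset.range (k - p), ((iterW η j (m (j + p))).length : ℤ)

/-- `w = tail_{η,p,x}(n)`: the digit word of the unique `x`-admissible sequence of
length `p` whose length-sum is `n`. -/
def TailSpec (η : A → List A) (p : ℕ) (x : A) (n : ℕ) (w : List ℕ) : Prop :=
  ∃ m a, AdmSeq η p m a x ∧ sumLen η p m = n ∧ w = dtDigits p m

/-- Radix order: shorter words first, ties broken lexicographically. -/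
def radLt (v w : List ℕ) : Prop :=
  v.length < w.length ∨ (v.length = w.length ∧ List.Lex (· < ·) v w)

/-- Reversed-radix order: longer words first, ties broken lexicographically. -/
def revLt (v w : List ℕ) : Prop :=
  w.length < v.length ∨ (v.length = w.length ∧ List.Lex (· < ·) v w)

/-- The total order `≺` on `{0,1}D*`. -/
def precLt (v w : List ℕ) : Prop :=
  (v.head? = some 1 ∧ w.head? = some 0) ∨
  (v.head? = some 0 ∧ w.head? = some 0 ∧ radLt v w) ∨
  (v.head? = some 1 ∧ w.head? = some 1 ∧ revLt v w)

/-- The base-2 value `Σ_{i<k} w_i 2^i` of the word `w = w_{k-1} ⋯ w_0`. -/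
def natVal2 (w : List ℕ) : ℕ := w.foldl (fun acc d => 2 * acc + d) 0

/-- The two's complement value `Σ_{i<k} w_i 2^i − w_{k-1} 2^k`. -/
def val2c (w : List ℕ) : ℤ := (natVal2 w : ℤ) - (w.headI : ℤ) * 2 ^ w.length

/-- Fibonacci numbers with `F 0 = 1`, `F 1 = 2`. -/
def fib2 : ℕ → ℕ
  | 0 => 1
  | 1 => 2
  | n + 2 => fib2 (n + 1) + fib2 n

/-- The Fibonacci complement value `Σ_{i<k} w_i F_i − w_{k-1} F_k`
of the word `w = w_{k-1} ⋯ w_0`. -/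
def valFc (w : List ℕ) : ℤ :=
  (∑ i ∈ Finset.range w.length, (w.reverse.getD i 0 : ℤ) * fib2 i) -
    (w.headI : ℤ) * fib2 w.length

section DTAux

variable {A : Type*} (η : A → List A)

theorem substW_nil' : substW η [] = [] := rfl

theorem substW_append' (u v : List A) :
    substW η (u ++ v) = substW η u ++ substW η v := by
  simp [substW]

theorem substW_singleton' (a : A) : substW η [a] = η a := by
  simp [substW]

theorem iterW_succ' (k : ℕ) (w : List A) :
    iterW η (k + 1) w = iterW η k (substW η w) := by
  simp only [iterW, Function.iterate_succ_apply]

theorem iterW_nil' (k : ℕ) : iterW η k [] = [] := by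
  induction k with
  | zero => rfl
  | succ k ih => rw [iterW_succ', substW_nil']; exact ih

theorem iterW_append' (k : ℕ) (u v : List A) :
    iterW η k (u ++ v) = iterW η k u ++ iterW η k v := by
  induction k generalizing u v with
  | zero => rfl
  | succ k ih => rw [iterW_succ', substW_append', ih, iterW_succ', iterW_succ']

theorem iterW_prefix' (k : ℕ) {u v : List A} (h : u <+: v) :
    iterW η k u <+: iterW η k v := by
  obtain ⟨t, rfl⟩ := h
  exact ⟨iterW η k t, (iterW_append' η k u t).symm⟩

theorem iterW_succ_single (p : ℕ) (x : A) :
    iterW η (p + 1) [x] = iterW η p (η x) := by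
  rw [iterW_succ', substW_singleton']

theorem concatDT_succ' (k : ℕ) (m : ℕ → List A) :
    concatDT η (k + 1) m = iterW η k (m k) ++ concatDT η k m := by
  simp [concatDT, List.range_succ]

theorem concatDT_congr' (k : ℕ) {m m' : ℕ → List A} (h : ∀ j < k, m j = m' j) :
    concatDT η k m = concatDT η k m' := by
  unfold concatDT
  congr 1
  apply List.map_congr_left
  intro j hj
  simp only [List.mem_reverse, List.mem_range] at hj
  rw [h j hj]

theorem length_concatDT' (k : ℕ) (m : ℕ → List A) :
    (concatDT η k m).length = sumLen η k m := by
  induction k with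
  | zero => simp [concatDT, sumLen]
  | succ k ih =>
    rw [concatDT_succ', List.length_append, ih, sumLen, sumLen, Finset.sum_range_succ]
    omega

theorem split_lemma' (p : ℕ) :
    ∀ (w : List A) (n : ℕ), n < (iterW η p w).length →
      ∃ u c, u ++ [c] <+: w ∧ (iterW η p u).length ≤ n ∧
        n < (iterW η p (u ++ [c])).length := by
  intro w
  induction w with
  | nil => intro n h; rw [iterW_nil'] at h; simp at h
  | cons c w ih =>
    intro n h
    by_cases hc : n < (iterW η p [c]).length
    · exact ⟨[], c, ⟨w, rfl⟩, by simp [iterW_nil'], by simpa using hc⟩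
    · push_neg at hc
      have hsplit : (c :: w) = [c] ++ w := rfl
      have hlen : (iterW η p (c :: w)).length
          = (iterW η p [c]).length + (iterW η p w).length := by
        rw [hsplit, iterW_append', List.length_append]
      obtain ⟨u, c', hpre, h1, h2⟩ := ih (n - (iterW η p [c]).length) (by omega)
      have hcu : (c :: u) = [c] ++ u := rfl
      have hcu2 : (c :: u) ++ [c'] = [c] ++ (u ++ [c']) := by simp
      refine ⟨c :: u, c', ?_, ?_, ?_⟩
      · obtain ⟨t, ht⟩ := hpre
        exact ⟨t, by simp [← ht]⟩
      · rw [hcu, iterW_append', List.length_append]; omega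
      · rw [hcu2, iterW_append', List.length_append]; omega

theorem admSeq_trunc' (p : ℕ) (ms : ℕ → List A) (as : ℕ → A) (x : A)
    (h : AdmSeq η (p + 1) ms as x) (hp : 1 ≤ p) :
    AdmSeq η p ms as (as p) := by
  constructor
  · intro i hi; exact h.1 i (by omega)
  · intro _
    have h1 := h.1 (p - 1) (by omega)
    rwa [Nat.sub_add_cancel hp] at h1

theorem concatDT_prefix' (ms : ℕ → List A) (as : ℕ → A) :
    ∀ p x, 1 ≤ p → AdmSeq η p ms as x →
      concatDT η p ms ++ [as 0] <+: iterW η p [x] := by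
  intro p
  induction p with
  | zero => intro x h; omega
  | succ p ih =>
    intro x _ h
    have h2 : ms p ++ [as p] <+: η x := by
      have := h.2 (by omega)
      rwa [Nat.add_sub_cancel] at this
    rcases Nat.eq_zero_or_pos p with rfl | hp0
    · have : iterW η 1 [x] = η x := by rw [iterW_succ_single]; rfl
      rw [this]
      have hc : concatDT η 1 ms = ms 0 := by
        rw [concatDT_succ']; simp [concatDT, iterW]
      rwa [hc]
    · have key := ih (as p) hp0 (admSeq_trunc' η p ms as x h hp0)
      have h3 : iterW η p (ms p) ++ iterW η p [as p] <+: iterW η (p + 1) [x] := by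
        rw [iterW_succ_single, ← iterW_append']
        exact iterW_prefix' η p h2
      obtain ⟨t, ht⟩ := key
      obtain ⟨s, hs⟩ := h3
      refine ⟨t ++ s, ?_⟩
      rw [concatDT_succ', ← hs, ← ht]
      simp [List.append_assoc]

theorem split_unique' (p : ℕ) (w u u' : List A) (c c' : A) (L : ℕ)
    (h1 : u ++ [c] <+: w) (h1' : u' ++ [c'] <+: w)
    (h2 : (iterW η p u).length ≤ L) (h3 : L < (iterW η p (u ++ [c])).length)
    (h2' : (iterW η p u').length ≤ L) (h3' : L < (iterW η p (u' ++ [c'])).length) :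
    u = u' ∧ c = c' := by
  have key : ∀ (v v' : List A) (d d' : A), v ++ [d] <+: w → v' ++ [d'] <+: w →
      (iterW η p v).length ≤ L → L < (iterW η p (v' ++ [d'])).length →
      ¬ v'.length < v.length := by
    intro v v' d d' hv hv' hle hlt hcon
    have hvc : v' ++ [d'] <+: v := by
      apply List.prefix_of_prefix_length_le hv' ((List.prefix_append v [d]).trans hv)
      simp; omega
    have := (iterW_prefix' η p hvc).length_le
    omega
  have k1 := key u u' c c' h1 h1' h2 h3'
  have k2 := key u' u c' c h1' h1 h2' h3
  have hlen : u.length = u'.length := by omega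
  have hu : u = u' := by
    have huw : u <+: w := (List.prefix_append u [c]).trans h1
    have huw' : u' <+: w := (List.prefix_append u' [c']).trans h1'
    exact (List.prefix_of_prefix_length_le huw huw' (le_of_eq hlen)).eq_of_length hlen
  subst hu
  have heq : u ++ [c] = u ++ [c'] :=
    (List.prefix_of_prefix_length_le h1 h1' (by simp)).eq_of_length (by simp)
  simp at heq
  exact ⟨rfl, heq⟩

theorem adm_unique' (ms ms' : ℕ → List A) (as as' : ℕ → A) :
    ∀ p x, AdmSeq η p ms as x → AdmSeq η p ms' as' x →
      concatDT η p ms = concatDT η p ms' →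
      ∀ i < p, ms i = ms' i ∧ as i = as' i := by
  intro p
  induction p with
  | zero => intro x _ _ _ i hi; omega
  | succ p ih =>
    intro x h h' hcd i hi
    have h2 : ms p ++ [as p] <+: η x := by
      have := h.2 (by omega); rwa [Nat.add_sub_cancel] at this
    have h2' : ms' p ++ [as' p] <+: η x := by
      have := h'.2 (by omega); rwa [Nat.add_sub_cancel] at this
    have hrest : (concatDT η p ms).length < (iterW η p [as p]).length := by
      rcases Nat.eq_zero_or_pos p with rfl | hp0
      · simp [concatDT, iterW]
      · have hh := (concatDT_prefix' η ms as p (as p) hp0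
          (admSeq_trunc' η p ms as x h hp0)).length_le
        rw [List.length_append, List.length_singleton] at hh
        omega
    have hrest' : (concatDT η p ms').length < (iterW η p [as' p]).length := by
      rcases Nat.eq_zero_or_pos p with rfl | hp0
      · simp [concatDT, iterW]
      · have hh := (concatDT_prefix' η ms' as' p (as' p) hp0
          (admSeq_trunc' η p ms' as' x h' hp0)).length_le
        rw [List.length_append, List.length_singleton] at hh
        omega
    have hM : iterW η p (ms p) ++ concatDT η p ms
        = iterW η p (ms' p) ++ concatDT η p ms' := by
      rw [← concatDT_succ', ← concatDT_succ']; exact hcd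
    set L := (iterW η p (ms p)).length + (concatDT η p ms).length with hL
    have hLeq : L = (iterW η p (ms' p)).length + (concatDT η p ms').length := by
      have := congrArg List.length hM
      simpa [List.length_append] using this
    have hsu := split_unique' η p (η x) (ms p) (ms' p) (as p) (as' p) L h2 h2'
      (by omega)
      (by rw [iterW_append', List.length_append]; omega)
      (by omega)
      (by rw [iterW_append', List.length_append]; omega)
    obtain ⟨hmm, hcc⟩ := hsu
    rcases Nat.lt_or_ge i p with hip | hip
    · have hrests : concatDT η p ms = concatDT η p ms' := by
        rw [hmm] at hM
        exact List.append_cancel_left hM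
      have hp0 : 1 ≤ p := by omega
      exact ih (as p) (admSeq_trunc' η p ms as x h hp0)
        (by rw [hmm, hcc] at *; exact admSeq_trunc' η p ms' as' x h' hp0)
        hrests i hip
    · have : i = p := by omega
      subst this
      exact ⟨hmm, hcc⟩

theorem adm_exists' :
    ∀ p x (m : List A), m <+: iterW η p [x] → m.length < (iterW η p [x]).length →
      ∃ ms as, AdmSeq η p ms as x ∧ concatDT η p ms = m := by
  intro p
  induction p with
  | zero =>
    intro x m hpre hlt
    have hm : m = [] := by
      have : (iterW η 0 [x]).length = 1 := rfl
      rw [this] at hlt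
      exact List.length_eq_zero_iff.mp (by omega)
    exact ⟨fun _ => [], fun _ => x, ⟨fun i hi => by omega, fun hh => by omega⟩,
      by simp [concatDT, hm]⟩
  | succ p ih =>
    intro x m hpre hlt
    rw [iterW_succ_single] at hpre hlt
    obtain ⟨u, c, huc, h1, h2⟩ := split_lemma' η p (η x) m.length hlt
    have huw : u <+: η x := (List.prefix_append u [c]).trans huc
    have hum : iterW η p u <+: m :=
      List.prefix_of_prefix_length_le (iterW_prefix' η p huw) hpre h1
    obtain ⟨rest, hrest⟩ := hum
    have hm2 : m <+: iterW η p (u ++ [c]) :=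
      List.prefix_of_prefix_length_le hpre (iterW_prefix' η p huc) (le_of_lt h2)
    have hr1 : rest <+: iterW η p [c] := by
      rw [iterW_append'] at hm2
      obtain ⟨s, hs⟩ := hm2
      refine ⟨s, ?_⟩
      apply List.append_cancel_left (as := iterW η p u)
      rw [← List.append_assoc, hrest]
      exact hs
    have hr2 : rest.length < (iterW η p [c]).length := by
      have hl := congrArg List.length hrest
      rw [List.length_append] at hl
      rw [iterW_append', List.length_append] at h2
      omega
    obtain ⟨ms0, as0, hadm0, hcd0⟩ := ih c rest hr1 hr2
    refine ⟨fun i => if i = p then u else ms0 i,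
      fun i => if i = p then c else as0 i, ⟨?_, ?_⟩, ?_⟩
    · intro i hi
      have hip : i ≠ p := by omega
      rcases Nat.lt_or_ge (i + 1) p with h' | h'
      · have hi1 : i + 1 ≠ p := by omega
        simpa [hip, hi1] using hadm0.1 i h'
      · have hi1 : i + 1 = p := by omega
        have hh := hadm0.2 (by omega)
        have hpm : p - 1 = i := by omega
        rw [hpm] at hh
        simpa [hip, hi1] using hh
    · intro _
      simpa [Nat.add_sub_cancel] using huc
    · rw [concatDT_succ',
        concatDT_congr' η p (m' := ms0) (fun j hj => by simp [Nat.ne_of_lt hj]), hcd0]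
      simpa using hrest

end DTAux

/-- If `m` is a proper prefix of `η^p(x)` with `p ≥ 1`, then
there is a unique `x`-admissible sequence `(m_i,a_i)_{i=0,…,p-1}` with
`|m| = Σ_{j<p} |η^j(m_j)|`; moreover `m = η^{p-1}(m_{p-1}) ⋯ η^0(m_0)`. -/
theorem prefix_unique_admissible [Finite A] (η : A → List A)
    (hη : IsSubstitution η) (p : ℕ) (hp : 1 ≤ p) (x : A) (m : List A)
    (hpre : m <+: iterW η p [x]) (hprop : m ≠ iterW η p [x]) :
    ∃ (ms : ℕ → List A) (as : ℕ → A),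
      (AdmSeq η p ms as x ∧ sumLen η p ms = m.length ∧ concatDT η p ms = m) ∧
      ∀ (ms' : ℕ → List A) (as' : ℕ → A),
        AdmSeq η p ms' as' x → sumLen η p ms' = m.length →
        ∀ i < p, ms i = ms' i ∧ as i = as' i := by
  have hlt : m.length < (iterW η p [x]).length := by
    rcases lt_or_eq_of_le hpre.length_le with h | h
    · exact h
    · exact absurd (hpre.eq_of_length h) hprop
  obtain ⟨ms, as, hadm, hcd⟩ := adm_exists' η p x m hpre hlt
  refine ⟨ms, as, ⟨hadm, ?_, hcd⟩, ?_⟩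
  · rw [← length_concatDT', hcd]
  · intro ms' as' hadm' hsum' i hip
    have hpre' := concatDT_prefix' η ms' as' p x hp hadm'
    have hlen' : (concatDT η p ms').length = m.length := by
      rw [length_concatDT']; exact hsum'
    have hcp : concatDT η p ms' <+: iterW η p [x] :=
      (List.prefix_append _ [as' 0]).trans hpre'
    have hm' : concatDT η p ms' = m :=
      (List.prefix_of_prefix_length_le hcp hpre (le_of_eq hlen')).eq_of_length hlen'
    exact adm_unique' η ms ms' as as' p x hadm hadm' (hcd.trans hm'.symm) i hip
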